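/- arXiv:2011.02545 — 3 statements merged into one kernel-verified Lean document; each statement's English description precedes it below -/
import Mathlib

section
/- Let H be a separable Hilbert space with orthonormal basis {e_j} and let W be the operator defined by W(e_j) = (1/2)e_{j+2} for j odd, W(e_j) = 2e_{j−2} for j even with j > 2, and W(e_2) = e_1. Then for each fixed k ∈ ℕ and all m ∈ ℕ, ‖W^{2k−1+m} P_{2k}‖ = 1/2^m, where P_n denotes the orthogonal projection onto span{e_1,…,e_n}. -/
set_option linter.unusedSectionVars false
set_option linter.unusedVariables false

open scoped InnerProductSpace
open Filter

noncomputable section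

variable {H : Type*} [NormedAddCommGroup H] [InnerProductSpace ℂ H] [CompleteSpace H]

/-- `m(F) := inf_{‖x‖=1} ‖F x‖`. -/
def mop (F : H →L[ℂ] H) : ℝ := ⨅ x : {x : H // ‖x‖ = 1}, ‖F x‖

/-- The orthogonal projection onto a finite-dimensional subspace, as an endomorphism of `H`. -/
def projCLM (K : Submodule ℂ H) (hK : FiniteDimensional ℂ K) : H →L[ℂ] H :=
  letI := hK
  letI : CompleteSpace K := FiniteDimensional.complete ℂ K
  K.subtypeL ∘L K.orthogonalProjection

/-- `L_m`, the span of the first `m` basis vectors. -/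
def Lspan (b : HilbertBasis ℕ ℂ H) (m : ℕ) : Submodule ℂ H :=
  Submodule.span ℂ (b '' Set.Iio m)

theorem Lspan_fd (b : HilbertBasis ℕ ℂ H) (m : ℕ) : FiniteDimensional ℂ (Lspan b m) :=
  FiniteDimensional.span_of_finite ℂ ((Set.finite_Iio m).image b)

/-- `P_m`, the orthogonal projection onto `L_m`. -/
def Pproj (b : HilbertBasis ℕ ℂ H) (m : ℕ) : H →L[ℂ] H := projCLM (Lspan b m) (Lspan_fd b m)

/-- `T_{U,W}^n (F) = W^n F U^n`. -/
def Tpow (W : H ≃L[ℂ] H) (U : H →L[ℂ] H) (n : ℕ) (F : H →L[ℂ] H) : H →L[ℂ] H :=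
  ((W : H →L[ℂ] H) ^ n) ∘L F ∘L (U ^ n)

/-- `S_{U,W}^n (F) = W^{-n} F U^{-n}` (here `U⁻¹ = star U` since `U` is unitary). -/
def Spow (W : H ≃L[ℂ] H) (U : H →L[ℂ] H) (n : ℕ) (F : H →L[ℂ] H) : H →L[ℂ] H :=
  ((W.symm : H →L[ℂ] H) ^ n) ∘L F ∘L ((star U) ^ n)

/-- The cosine operator function `C^{(n)} = (1/2)(T^n + S^n)`. -/
def Cpow (W : H ≃L[ℂ] H) (U : H →L[ℂ] H) (n : ℕ) (F : H →L[ℂ] H) : H →L[ℂ] H :=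
  (2 : ℂ)⁻¹ • (Tpow W U n F + Spow W U n F)

/-- `B₀(H)`, the compact operators on `H`, as a submodule of `B(H)`. -/
def B0 : Submodule ℂ (H →L[ℂ] H) := compactOperator (RingHom.id ℂ) H H

theorem Tpow_mem (W : H ≃L[ℂ] H) (U : H →L[ℂ] H) (n : ℕ) (F : H →L[ℂ] H)
    (hF : IsCompactOperator F) : Tpow W U n F ∈ B0 (H := H) :=
  (hF.comp_clm (U ^ n)).clm_comp ((W : H →L[ℂ] H) ^ n)

theorem Spow_mem (W : H ≃L[ℂ] H) (U : H →L[ℂ] H) (n : ℕ) (F : H →L[ℂ] H)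
    (hF : IsCompactOperator F) : Spow W U n F ∈ B0 (H := H) :=
  (hF.comp_clm ((star U) ^ n)).clm_comp ((W.symm : H →L[ℂ] H) ^ n)

theorem Cpow_mem (W : H ≃L[ℂ] H) (U : H →L[ℂ] H) (n : ℕ) (F : H →L[ℂ] H)
    (hF : IsCompactOperator F) : Cpow W U n F ∈ B0 (H := H) :=
  Submodule.smul_mem _ _ (Submodule.add_mem _ (Tpow_mem W U n F hF) (Spow_mem W U n F hF))

/-- `T^n` as a map of `B₀(H)`. -/
def TB0 (W : H ≃L[ℂ] H) (U : H →L[ℂ] H) (n : ℕ) (F : B0 (H := H)) : B0 (H := H) :=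
  ⟨Tpow W U n F.1, Tpow_mem W U n F.1 F.2⟩

/-- `C^{(n)}` as a map of `B₀(H)`. -/
def CB0 (W : H ≃L[ℂ] H) (U : H →L[ℂ] H) (n : ℕ) (F : B0 (H := H)) : B0 (H := H) :=
  ⟨Cpow W U n F.1, Cpow_mem W U n F.1 F.2⟩

/-- The absolute value `|G| = sqrt(G* G)` of an operator. -/
def absop (G : H →L[ℂ] H) : H →L[ℂ] H := CFC.sqrt (star G * G)

/-- The trace computed in the orthonormal basis `b`. -/
def trB (b : HilbertBasis ℕ ℂ H) (A : H →L[ℂ] H) : ℂ := ∑' j, ⟪b j, A (b j)⟫_ℂ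

/-- `G` is trace class (w.r.t. the basis `b`): the trace of `|G|` converges. -/
def IsTraceClassB (b : HilbertBasis ℕ ℂ H) (G : H →L[ℂ] H) : Prop :=
  Summable fun j => ⟪b j, absop G (b j)⟫_ℂ

/-- The trace norm `‖G‖₁ = tr |G|` computed in the basis `b`. -/
def traceNormB (b : HilbertBasis ℕ ℂ H) (G : H →L[ℂ] H) : ℝ :=
  ∑' j, (⟪b j, absop G (b j)⟫_ℂ).re

/-- `L_n` for a basis indexed by positive integers. -/
def LspanP (b : HilbertBasis ℕ+ ℂ H) (n : ℕ) : Submodule ℂ H :=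
  Submodule.span ℂ (b '' {j : ℕ+ | (j : ℕ) ≤ n})

theorem LspanP_fd (b : HilbertBasis ℕ+ ℂ H) (n : ℕ) : FiniteDimensional ℂ (LspanP b n) := by
  refine FiniteDimensional.span_of_finite ℂ (Set.Finite.image b ?_)
  have : {j : ℕ+ | (j : ℕ) ≤ n} = ((↑) : ℕ+ → ℕ) ⁻¹' Set.Iic n := rfl
  rw [this]
  exact (Set.finite_Iic n).preimage (Set.injOn_of_injective PNat.coe_injective)

/-- `P_n` for a basis indexed by positive integers. -/
def PprojP (b : HilbertBasis ℕ+ ℂ H) (n : ℕ) : H →L[ℂ] H := projCLM (LspanP b n) (LspanP_fd b n)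
/-!
For `j ≤ 2n` the operator `W^n` maps `e_j` to a multiple of a single basis vector:
`e_j ↦ 2^{-n} e_{j+2n}` for odd `j`, while for even `j` the vector first walks down to `e_1`,
gaining a factor `2` per step, and then up the odd vectors, so `e_j ↦ 2^{j-1-n} e_{2n+1-j}`.
These targets are distinct, so on `L_{2k}` with `n = 2k-1+m` the operator `W^n` is diagonal
between two orthonormal systems, and its norm there is the largest weight, `2^{-m}`, attained
at `e_{2k}`.
-/

section OrthonormalImage

variable {𝕜 E F ι : Type*} [RCLike 𝕜] [NormedAddCommGroup E] [InnerProductSpace 𝕜 E]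
  [NormedAddCommGroup F] [InnerProductSpace 𝕜 F]

theorem Orthonormal.norm_sum_smul_sq {v : ι → E} (hv : Orthonormal 𝕜 v) (l : ι → 𝕜)
    (s : Finset ι) : ‖∑ i ∈ s, l i • v i‖ ^ 2 = ∑ i ∈ s, ‖l i‖ ^ 2 := by
  simpa using hv.orthogonalFamily.norm_sum l s

theorem Orthonormal.norm_map_le_of_apply_eq_smul {v : ι → E} {u : ι → F}
    (hv : Orthonormal 𝕜 v) (hu : Orthonormal 𝕜 u) {T : E →ₗ[𝕜] F} {c : ι → 𝕜} {C : ℝ}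
    (hC : 0 ≤ C) (hT : ∀ i, T (v i) = c i • u i) (hc : ∀ i, ‖c i‖ ≤ C) {y : E}
    (hy : y ∈ Submodule.span 𝕜 (Set.range v)) : ‖T y‖ ≤ C * ‖y‖ := by
  obtain ⟨l, rfl⟩ := Finsupp.mem_span_range_iff_exists_finsupp.mp hy
  have hTy : T (l.sum fun i a => a • v i) = ∑ i ∈ l.support, (l i * c i) • u i := by
    simp only [Finsupp.sum, map_sum, map_smul, hT, smul_smul]
  have hsq :
      ‖T (l.sum fun i a => a • v i)‖ ^ 2 ≤ (C * ‖l.sum fun i a => a • v i‖) ^ 2 := by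
    rw [hTy, mul_pow, Finsupp.sum, hu.norm_sum_smul_sq, hv.norm_sum_smul_sq, Finset.mul_sum]
    gcongr with i
    rw [norm_mul, mul_pow, mul_comm]
    gcongr
    exact hc i
  exact (pow_le_pow_iff_left₀ (norm_nonneg _) (by positivity) two_ne_zero).mp hsq

theorem ContinuousLinearMap.opNorm_comp_starProjection_le {K : Submodule 𝕜 E}
    [K.HasOrthogonalProjection] (T : E →L[𝕜] F) {C : ℝ} (hC : 0 ≤ C)
    (hT : ∀ y ∈ K, ‖T y‖ ≤ C * ‖y‖) : ‖T ∘L K.starProjection‖ ≤ C :=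
  T.comp _ |>.opNorm_le_bound hC fun x =>
    (hT _ (K.starProjection_apply_mem x)).trans <| by
      gcongr; exact K.norm_starProjection_apply_le x

theorem ContinuousLinearMap.norm_apply_le_opNorm_comp_starProjection {K : Submodule 𝕜 E}
    [K.HasOrthogonalProjection] (T : E →L[𝕜] F) {x : E} (hx : x ∈ K) :
    ‖T x‖ ≤ ‖T ∘L K.starProjection‖ * ‖x‖ := by
  simpa [K.starProjection_eq_self_iff.mpr hx] using (T ∘L K.starProjection).le_opNorm x

end OrthonormalImage

@[simp]
theorem Nat.coe_toPNat (n : ℕ) (h : 0 < n) : (n.toPNat h : ℕ) = n := rfl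

theorem ContinuousLinearEquiv.mul_apply {𝕜 E : Type*} [Semiring 𝕜] [TopologicalSpace E]
    [AddCommMonoid E] [Module 𝕜 E] (f g : E ≃L[𝕜] E) (x : E) : (f * g) x = f (g x) :=
  rfl

namespace WeightedShift

def index (n : ℕ) (j : ℕ+) : ℕ+ :=
  if Odd (j : ℕ) then (j + 2 * n : ℕ).toPNat (by positivity)
  else (2 * (n - j / 2) + 1).toPNat (by positivity)

def weight (n : ℕ) (j : ℕ+) : ℂ :=
  if Odd (j : ℕ) then ((2 : ℂ) ^ n)⁻¹ else 2 ^ ((j : ℕ) - 1) / 2 ^ n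

theorem coe_index (n : ℕ) (j : ℕ+) :
    (index n j : ℕ) = if Odd (j : ℕ) then j + 2 * n else 2 * (n - j / 2) + 1 := by
  by_cases h : Odd (j : ℕ) <;> simp [index, h]

theorem index_injOn (n : ℕ) : Set.InjOn (index n) {j : ℕ+ | (j : ℕ) ≤ 2 * n} := by
  intro j (hj : (j : ℕ) ≤ 2 * n) j' (hj' : (j' : ℕ) ≤ 2 * n) he
  have hcoe := congrArg PNat.val he
  have := j.pos
  have := j'.pos
  apply PNat.coe_injective
  rw [coe_index, coe_index] at hcoe
  split_ifs at hcoe with ho ho' ho' <;> rw [Nat.odd_iff] at * <;> omega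

theorem norm_weight_le (k m : ℕ) {j : ℕ+} (hj : (j : ℕ) ≤ 2 * k) :
    ‖weight (2 * k - 1 + m) j‖ ≤ ((2 : ℝ) ^ m)⁻¹ := by
  have := j.pos
  unfold weight
  split_ifs
  · rw [norm_inv, norm_pow, RCLike.norm_two]
    exact inv_anti₀ (by positivity) (pow_le_pow_right₀ one_le_two (by omega))
  · rw [norm_div, norm_pow, norm_pow, RCLike.norm_two, div_le_iff₀ (by positivity),
      ← div_eq_inv_mul, le_div_iff₀ (by positivity), ← pow_add]
    exact pow_le_pow_right₀ one_le_two (by omega)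

theorem norm_weight_two_mul (k m : ℕ) (hk : 1 ≤ k) :
    ‖weight (2 * k - 1 + m) ((2 * k).toPNat (by omega))‖ = ((2 : ℝ) ^ m)⁻¹ := by
  have heven : ¬ Odd (2 * k) := by simp [Nat.odd_iff]
  rw [weight.eq_def, Nat.coe_toPNat, if_neg heven, norm_div, norm_pow, norm_pow, RCLike.norm_two,
    pow_add, div_mul_eq_div_div, div_self (by positivity), one_div]

variable {E : Type*} [NormedAddCommGroup E] [InnerProductSpace ℂ E] (b : ℕ+ → E)
  (W : E ≃L[ℂ] E)

theorem pow_apply_basis_of_odd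
    (h1 : ∀ j : ℕ+, Odd (j : ℕ) → W (b j) = ((1 : ℂ) / 2) • b (j + 2))
    (r : ℕ) {j : ℕ+} (hj : Odd (j : ℕ)) :
    (W ^ r) (b j) = ((2 : ℂ) ^ r)⁻¹ • b ((j + 2 * r : ℕ).toPNat (by positivity)) := by
  induction r generalizing j with
  | zero => simp only [pow_zero, inv_one, one_smul]; rfl
  | succ r ih =>
    have hj2 : Odd ((j + 2 : ℕ+) : ℕ) := by simpa [PNat.add_coe] using hj.add_even even_two
    rw [pow_succ, ContinuousLinearEquiv.mul_apply, h1 j hj, map_smul, ih hj2, smul_smul]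
    congr 1
    · rw [pow_succ, mul_inv, one_div, mul_comm]
    · congr 1
      apply PNat.eq
      simp only [Nat.coe_toPNat, PNat.add_coe, PNat.val_ofNat]; ring

theorem pow_succ_apply_basis_two_mul_succ
    (h2 : ∀ j : ℕ+, Even (j : ℕ) → 2 < j → W (b j) = (2 : ℂ) • b (j - 2))
    (h3 : W (b 2) = b 1) (i : ℕ) :
    (W ^ (i + 1)) (b ((2 * (i + 1)).toPNat (by positivity))) = (2 : ℂ) ^ i • b 1 := by
  induction i with
  | zero => rw [pow_zero, one_smul]; exact h3
  | succ i ih =>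
    set j : ℕ+ := (2 * (i + 1 + 1)).toPNat (by positivity)
    have heven : Even (j : ℕ) := even_two_mul _
    have hlt : 2 < j := by rw [← PNat.coe_lt_coe]; simp [j]
    have hsub : j - 2 = (2 * (i + 1)).toPNat (by positivity) := by
      apply PNat.coe_injective
      rw [PNat.sub_coe, if_pos hlt]
      simp only [Nat.coe_toPNat, PNat.val_ofNat, j]; omega
    rw [pow_succ, ContinuousLinearEquiv.mul_apply, h2 _ heven hlt, hsub, map_smul, ih, smul_smul,
      pow_succ, mul_comm]

theorem pow_apply_basis
    (h1 : ∀ j : ℕ+, Odd (j : ℕ) → W (b j) = ((1 : ℂ) / 2) • b (j + 2))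
    (h2 : ∀ j : ℕ+, Even (j : ℕ) → 2 < j → W (b j) = (2 : ℂ) • b (j - 2))
    (h3 : W (b 2) = b 1) {n : ℕ} {j : ℕ+} (hj : (j : ℕ) ≤ 2 * n) :
    (W ^ n) (b j) = weight n j • b (index n j) := by
  by_cases ho : Odd (j : ℕ)
  · rw [pow_apply_basis_of_odd b W h1 n ho, weight.eq_def, if_pos ho]
    congr 2
    apply PNat.eq
    rw [coe_index, if_pos ho]; rfl
  obtain ⟨i, hi⟩ : ∃ i, (j : ℕ) = 2 * (i + 1) := by
    have := j.pos
    rw [Nat.not_odd_iff] at ho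
    exact ⟨j / 2 - 1, by omega⟩
  obtain ⟨r, rfl⟩ : ∃ r, n = r + (i + 1) := ⟨n - (i + 1), by omega⟩
  obtain rfl : j = (2 * (i + 1)).toPNat (by positivity) := PNat.coe_injective hi
  rw [pow_add, ContinuousLinearEquiv.mul_apply, pow_succ_apply_basis_two_mul_succ b W h2 h3,
    map_smul, pow_apply_basis_of_odd b W h1 r odd_one, smul_smul, weight.eq_def, if_neg ho]
  congr 1
  · rw [Nat.coe_toPNat, show 2 * (i + 1) - 1 = i + (i + 1) by omega, pow_add, pow_add]
    field_simp
    ring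
  · congr 1
    apply PNat.eq
    rw [coe_index, if_neg ho]
    simp only [Nat.coe_toPNat, PNat.val_ofNat]; omega

end WeightedShift

/-- for the weighted shift `W`, `‖W^{2k-1+m} P_{2k}‖ = 1/2^m`. -/
theorem stmt9 (b : HilbertBasis ℕ+ ℂ H) (W : H ≃L[ℂ] H)
    (h1 : ∀ j : ℕ+, Odd (j : ℕ) → W (b j) = ((1 : ℂ) / 2) • b (j + 2))
    (h2 : ∀ j : ℕ+, Even (j : ℕ) → 2 < j → W (b j) = (2 : ℂ) • b (j - 2))
    (h3 : W (b 2) = b 1) :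
    ∀ k m : ℕ, 1 ≤ k → 1 ≤ m →
      ‖((W ^ (2 * k - 1 + m) : H ≃L[ℂ] H) : H →L[ℂ] H) ∘L PprojP b (2 * k)‖
        = 1 / 2 ^ m := by
  intro k m hk _
  set n := 2 * k - 1 + m
  set S := {j : ℕ+ | (j : ℕ) ≤ 2 * k}
  have := LspanP_fd b (2 * k)
  have hP : PprojP b (2 * k) = (LspanP b (2 * k)).starProjection := rfl
  have hspan : LspanP b (2 * k) = Submodule.span ℂ (Set.range fun j : S => b j) := by
    rw [LspanP, Set.image_eq_range]
  have hSn : S ⊆ {j : ℕ+ | (j : ℕ) ≤ 2 * n} := fun j (hj : (j : ℕ) ≤ 2 * k) => by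
    show (j : ℕ) ≤ 2 * n; omega
  rw [hP, one_div]
  apply le_antisymm
  · refine ContinuousLinearMap.opNorm_comp_starProjection_le _ (by positivity) fun y hy => ?_
    rw [hspan] at hy
    exact (b.orthonormal.comp _ Subtype.val_injective).norm_map_le_of_apply_eq_smul
      (b.orthonormal.comp _ ((WeightedShift.index_injOn n).mono hSn).injective) (by positivity)
      (fun j => WeightedShift.pow_apply_basis b W h1 h2 h3 (hSn j.2))
      (fun j => WeightedShift.norm_weight_le k m j.2) hy
  · have hmem : b ((2 * k).toPNat (by omega)) ∈ LspanP b (2 * k) :=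
      Submodule.subset_span ⟨_, le_refl (2 * k), rfl⟩
    have := ContinuousLinearMap.norm_apply_le_opNorm_comp_starProjection
      ((W ^ n : H ≃L[ℂ] H) : H →L[ℂ] H) hmem
    rwa [b.orthonormal.1, mul_one, ContinuousLinearEquiv.coe_coe,
      WeightedShift.pow_apply_basis b W h1 h2 h3 (by rw [Nat.coe_toPNat]; omega), norm_smul,
      b.orthonormal.1, mul_one, WeightedShift.norm_weight_two_mul k m hk] at this

end
end

section
/- Let U, W ∈ B(H) with W invertible and U unitary, and suppose that for every finite-dimensional subspace K of H there exist strictly increasing sequences {n_j}, {m_j} ⊆ ℕ and sequences {G_j}, {D_j} of compact operators with ‖G_j − P_K‖ → 0, ‖D_j − P_K‖ → 0, ‖W^{−m_j} G_j‖ → 0, and ‖W^{n_j} D_j‖ → 0. Then m(W) < 1 < ‖W‖, where m(W) := inf_{‖x‖=1}‖W x‖. -/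
/-!
If `1 ≤ m(W)`, then `W` and all its powers are expanding, so for `x ≠ 0` spanning `K`,
`‖W^{n_j} D_j x‖ ≥ ‖D_j x‖ → ‖P_K x‖ = ‖x‖`, contradicting `‖W^{n_j} D_j‖ → 0`. Symmetrically,
`‖W‖ ≤ 1` makes `W⁻¹` expanding, which contradicts `‖W^{-m_j} G_j‖ → 0`.
-/

set_option linter.unusedSectionVars false
set_option linter.unusedVariables false

open scoped InnerProductSpace
open Filter

noncomputable section

variable {H : Type*} [NormedAddCommGroup H] [InnerProductSpace ℂ H] [CompleteSpace H]

theorem mop_le_norm_apply (F : H →L[ℂ] H) {x : H} (hx : ‖x‖ = 1) : mop F ≤ ‖F x‖ :=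
  ciInf_le ⟨0, fun _ ⟨y, hy⟩ => hy ▸ norm_nonneg _⟩ (⟨x, hx⟩ : {x : H // ‖x‖ = 1})

theorem mop_mul_norm_le (F : H →L[ℂ] H) (x : H) : mop F * ‖x‖ ≤ ‖F x‖ := by
  rcases eq_or_ne x 0 with rfl | hx
  · simp
  have hx' : 0 < ‖x‖ := norm_pos_iff.2 hx
  have hu : ‖(‖x‖⁻¹ : ℂ) • x‖ = 1 := by simp [norm_smul, hx'.ne']
  have := mop_le_norm_apply F hu
  rw [map_smul, norm_smul, norm_inv, Complex.norm_real, norm_norm, inv_mul_eq_div,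
    le_div_iff₀ hx'] at this
  exact this

theorem antilipschitzWith_one_of_one_le_mop (F : H →L[ℂ] H) (h : 1 ≤ mop F) :
    AntilipschitzWith 1 F :=
  F.antilipschitz_of_bound fun x => by
    simpa using (mul_le_mul_of_nonneg_right h (norm_nonneg x)).trans (mop_mul_norm_le F x)

theorem projCLM_apply_of_mem (K : Submodule ℂ H) (hK : FiniteDimensional ℂ K) {x : H}
    (hx : x ∈ K) : projCLM K hK x = x :=
  letI := hK
  K.starProjection_eq_self_iff.2 hx

theorem AntilipschitzWith.iterate {α : Type*} [PseudoEMetricSpace α] {K : NNReal} {f : α → α}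
    (hf : AntilipschitzWith K f) : ∀ n, AntilipschitzWith (K ^ n) f^[n]
  | 0 => by simpa only [pow_zero, Function.iterate_zero] using AntilipschitzWith.id
  | n + 1 => by rw [pow_succ']; exact (AntilipschitzWith.iterate hf n).comp hf

theorem ContinuousLinearEquiv.antilipschitzWith_one_symm {𝕜 E F : Type*}
    [NontriviallyNormedField 𝕜] [NormedAddCommGroup E] [NormedSpace 𝕜 E]
    [NormedAddCommGroup F] [NormedSpace 𝕜 F]
    (e : E ≃L[𝕜] F) (h : ‖(e : E →L[𝕜] F)‖ ≤ 1) : AntilipschitzWith 1 e.symm := fun x y =>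
  (e.symm.antilipschitz x y).trans <| by
    gcongr
    simpa [← NNReal.coe_le_coe] using h

theorem ContinuousLinearMap.eq_zero_of_tendsto_pow_comp {𝕜 E ι : Type*}
    [NontriviallyNormedField 𝕜] [NormedAddCommGroup E] [NormedSpace 𝕜 E]
    {l : Filter ι} [l.NeBot] {A : E →L[𝕜] E} (hA : AntilipschitzWith 1 A) {T : ι → E →L[𝕜] E}
    {P : E →L[𝕜] E} (hT : Tendsto T l (nhds P)) {n : ι → ℕ}
    (hAT : Tendsto (fun j => (A ^ n j) ∘L T j) l (nhds 0)) : P = 0 := by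
  ext x
  have hTx : Tendsto (fun j => T j x) l (nhds (P x)) :=
    ((continuous_eval_const x).tendsto P).comp hT
  have hATx : Tendsto (fun j => ((A ^ n j) ∘L T j) x) l (nhds 0) :=
    ((continuous_eval_const x).tendsto 0).comp hAT
  have hle (j : ι) : ‖T j x‖ ≤ ‖((A ^ n j) ∘L T j) x‖ := by
    have hAn : AntilipschitzWith 1 ⇑(A ^ n j) := by
      simpa only [FunLike.coe_pow_eq_iterate, one_pow] using hA.iterate (n j)
    simpa using (A ^ n j).bound_of_antilipschitz hAn (T j x)
  exact tendsto_nhds_unique hTx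
    (squeeze_zero_norm hle (tendsto_zero_iff_norm_tendsto_zero.1 hATx))

theorem stmt11_general [Nontrivial H] (W : H ≃L[ℂ] H)
    (hyp : ∀ (K : Submodule ℂ H) (hK : FiniteDimensional ℂ K),
      ∃ nseq mseq : ℕ → ℕ, StrictMono nseq ∧ StrictMono mseq ∧
      ∃ G D : ℕ → H →L[ℂ] H,
        (∀ j, IsCompactOperator (G j)) ∧ (∀ j, IsCompactOperator (D j)) ∧
        Filter.Tendsto (fun j => ‖G j - projCLM K hK‖) atTop (nhds 0) ∧
        Filter.Tendsto (fun j => ‖D j - projCLM K hK‖) atTop (nhds 0) ∧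
        Filter.Tendsto (fun j => ‖((W.symm : H →L[ℂ] H) ^ mseq j) ∘L G j‖) atTop (nhds 0) ∧
        Filter.Tendsto (fun j => ‖((W : H →L[ℂ] H) ^ nseq j) ∘L D j‖) atTop (nhds 0)) :
    mop (W : H →L[ℂ] H) < 1 ∧ 1 < ‖(W : H →L[ℂ] H)‖ := by
  obtain ⟨x, hx⟩ := exists_ne (0 : H)
  have hK : FiniteDimensional ℂ (ℂ ∙ x) :=
    FiniteDimensional.span_of_finite ℂ (Set.finite_singleton x)
  have hP : projCLM (ℂ ∙ x) hK ≠ 0 := fun h =>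
    hx <| by rw [← projCLM_apply_of_mem _ hK (Submodule.mem_span_singleton_self x), h,
      zero_apply]
  obtain ⟨n, m, -, -, G, D, -, -, hG, hD, hWG, hWD⟩ := hyp (ℂ ∙ x) hK
  constructor
  · by_contra! h
    exact hP <| ContinuousLinearMap.eq_zero_of_tendsto_pow_comp
      (antilipschitzWith_one_of_one_le_mop _ h) (tendsto_iff_norm_sub_tendsto_zero.2 hD)
      (tendsto_zero_iff_norm_tendsto_zero.2 hWD)
  · by_contra! h
    exact hP <| ContinuousLinearMap.eq_zero_of_tendsto_pow_comp
      (W.antilipschitzWith_one_symm h) (tendsto_iff_norm_sub_tendsto_zero.2 hG)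
      (tendsto_zero_iff_norm_tendsto_zero.2 hWG)

/-- the `0`-transitivity type condition implies `m(W) < 1 < ‖W‖`. -/
theorem stmt11 [Nontrivial H] (W : H ≃L[ℂ] H) (U : H →L[ℂ] H)
    (hU : U ∈ unitary (H →L[ℂ] H))
    (hyp : ∀ (K : Submodule ℂ H) (hK : FiniteDimensional ℂ K),
      ∃ nseq mseq : ℕ → ℕ, StrictMono nseq ∧ StrictMono mseq ∧
      ∃ G D : ℕ → H →L[ℂ] H,
        (∀ j, IsCompactOperator (G j)) ∧ (∀ j, IsCompactOperator (D j)) ∧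
        Filter.Tendsto (fun j => ‖G j - projCLM K hK‖) atTop (nhds 0) ∧
        Filter.Tendsto (fun j => ‖D j - projCLM K hK‖) atTop (nhds 0) ∧
        Filter.Tendsto (fun j => ‖((W.symm : H →L[ℂ] H) ^ mseq j) ∘L G j‖) atTop (nhds 0) ∧
        Filter.Tendsto (fun j => ‖((W : H →L[ℂ] H) ^ nseq j) ∘L D j‖) atTop (nhds 0)) :
    mop (W : H →L[ℂ] H) < 1 ∧ 1 < ‖(W : H →L[ℂ] H)‖ :=
  stmt11_general W hyp

end
end

section
/- Let U, W ∈ B(H) with W invertible and U unitary, and suppose there exist a nonzero finite-dimensional subspace K of H and N ∈ ℕ such that U^n(K) ⊥ K for all n ≥ N. If the orthogonal projection P_K lies in the norm-closure (in B_0(H)) of the set of periodic elements of the sequence {S_{U,W}^n}, then ‖W‖ > 1. -/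
set_option linter.unusedSectionVars false
set_option linter.unusedVariables false

open scoped InnerProductSpace
open Filter

noncomputable section

variable {H : Type*} [NormedAddCommGroup H] [InnerProductSpace ℂ H] [CompleteSpace H]

/-!
Suppose `‖W‖ ≤ 1` and take a unit vector `x ∈ K`. If `S^{kN'} F = F` for all `k`, then
`F = W^m F U^m` for the multiples `m` of `N'`, so `‖F x‖ ≤ ‖F (U^m x)‖`. Along the multiples of
`p = (N + 1) N'` the vectors `U^{jp} x` form an orthonormal sequence, which a compact `F` sends to
a null sequence; hence `F x = 0`. This closed condition passes to the closure, contradicting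
`P_K x = x`.
-/

open Topology

section

variable {𝕜 E E' : Type*} [RCLike 𝕜] [NormedAddCommGroup E] [InnerProductSpace 𝕜 E]
  [NormedAddCommGroup E'] [InnerProductSpace 𝕜 E']

theorem Orthonormal.tendsto_inner_right_zero {v : ℕ → E} (hv : Orthonormal 𝕜 v) (w : E) :
    Tendsto (fun j => ⟪w, v j⟫_𝕜) atTop (𝓝 0) := by
  rw [tendsto_zero_iff_norm_tendsto_zero]
  have hsq := (hv.inner_products_summable (x := w)).tendsto_atTop_zero
  have hsqrt := (Real.continuous_sqrt.tendsto 0).comp hsq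
  simpa only [Function.comp_def, Real.sqrt_zero, Real.sqrt_sq (norm_nonneg _), norm_inner_symm]
    using hsqrt

theorem IsCompactOperator.tendsto_apply_orthonormal [CompleteSpace E] [CompleteSpace E']
    {F : E →L[𝕜] E'} (hF : IsCompactOperator F) {v : ℕ → E} (hv : Orthonormal 𝕜 v) :
    Tendsto (fun j => F (v j)) atTop (𝓝 0) := by
  refine tendsto_of_subseq_tendsto fun ns hns => ?_
  obtain ⟨a, -, φ, hφ, ha⟩ := (hF.isCompact_closure_image_closedBall 1).tendsto_subseq
    (x := fun j => F (v (ns j))) fun j => subset_closure ⟨v (ns j), by simp [hv.1], rfl⟩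
  -- Every cluster point `a` of `F (v j)` is weakly null, since `⟪a, F y⟫ = ⟪F† a, y⟫`.
  have hweak : Tendsto (fun j => ⟪a, F (v (ns (φ j)))⟫_𝕜) atTop (𝓝 0) := by
    simp only [← ContinuousLinearMap.adjoint_inner_left]
    exact (hv.tendsto_inner_right_zero _).comp (hns.comp hφ.tendsto_atTop)
  have ha0 : a = 0 :=
    inner_self_eq_zero.mp (tendsto_nhds_unique (tendsto_const_nhds.inner ha) hweak)
  exact ⟨φ, ha0 ▸ ha⟩

theorem orthonormal_pow_apply_of_mem_unitary [CompleteSpace E] {U : E →L[𝕜] E}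
    (hU : U ∈ unitary (E →L[𝕜] E)) {x : E} (hx : ‖x‖ = 1)
    (horth : ∀ n, 0 < n → ⟪(U ^ n) x, x⟫_𝕜 = 0) :
    Orthonormal 𝕜 fun j : ℕ => (U ^ j) x := by
  have hUn : ∀ n, U ^ n ∈ unitary (E →L[𝕜] E) := fun n => pow_mem hU n
  have hlt : ∀ i j, i < j → ⟪(U ^ j) x, (U ^ i) x⟫_𝕜 = 0 := by
    intro i j hij
    obtain ⟨k, rfl⟩ := Nat.exists_eq_add_of_lt hij
    rw [add_assoc, pow_add, mul_apply_eq_comp,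
      ContinuousLinearMap.inner_map_map_of_mem_unitary (hUn i)]
    exact horth _ k.succ_pos
  refine ⟨fun j => by rw [ContinuousLinearMap.norm_map_of_mem_unitary (hUn j), hx], ?_⟩
  intro i j hij
  rcases hij.lt_or_gt with h | h
  · rw [inner_eq_zero_symm]
    exact hlt i j h
  · exact hlt j i h

theorem norm_le_norm_symm_pow_apply {F : Type*} [NormedAddCommGroup F] [NormedSpace 𝕜 F]
    {W : F ≃L[𝕜] F} (hW : ‖(W : F →L[𝕜] F)‖ ≤ 1) (m : ℕ) (y : F) :
    ‖y‖ ≤ ‖((W.symm : F →L[𝕜] F) ^ m) y‖ := by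
  induction m with
  | zero => simp
  | succ m ih =>
    rw [pow_succ', mul_apply_eq_comp]
    set z := ((W.symm : F →L[𝕜] F) ^ m) y
    calc ‖y‖ ≤ ‖z‖ := ih
      _ = ‖(W : F →L[𝕜] F) (W.symm z)‖ := by simp
      _ ≤ ‖(W : F →L[𝕜] F)‖ * ‖W.symm z‖ := (W : F →L[𝕜] F).le_opNorm _
      _ ≤ ‖W.symm z‖ := mul_le_of_le_one_left (norm_nonneg _) hW

end

theorem norm_apply_le_of_Spow_eq_self {W : H ≃L[ℂ] H} {U : H →L[ℂ] H}
    (hU : U ∈ unitary (H →L[ℂ] H)) (hW : ‖(W : H →L[ℂ] H)‖ ≤ 1) {m : ℕ} {F : H →L[ℂ] H}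
    (hF : Spow W U m F = F) (x : H) : ‖F x‖ ≤ ‖F ((U ^ m) x)‖ :=
  calc ‖F x‖ ≤ ‖((W.symm : H →L[ℂ] H) ^ m) (F x)‖ := norm_le_norm_symm_pow_apply hW m _
    _ = ‖F ((U ^ m) x)‖ := by
      have hinv : (star U ^ m) ((U ^ m) x) = x := by
        simpa [star_pow] using congr($(Unitary.star_mul_self_of_mem (pow_mem hU m)) x)
      conv_rhs => rw [← hF, Spow, ContinuousLinearMap.comp_apply,
        ContinuousLinearMap.comp_apply, hinv]

theorem apply_eq_zero_of_forall_Spow_eq_self {W : H ≃L[ℂ] H} {U : H →L[ℂ] H}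
    (hU : U ∈ unitary (H →L[ℂ] H)) (hW : ‖(W : H →L[ℂ] H)‖ ≤ 1) {x : H} (hx : ‖x‖ = 1) {N : ℕ}
    (horth : ∀ n ≥ N, ⟪(U ^ n) x, x⟫_ℂ = 0) {F : H →L[ℂ] H} (hF : IsCompactOperator F)
    {N' : ℕ} (hN' : 0 < N') (hper : ∀ k : ℕ, Spow W U (k * N') F = F) : F x = 0 := by
  set p := (N + 1) * N'
  have hNp : N ≤ p := (Nat.le_succ N).trans (Nat.le_mul_of_pos_right _ hN')
  have hz : Orthonormal ℂ fun j : ℕ => ((U ^ p) ^ j) x :=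
    orthonormal_pow_apply_of_mem_unitary (pow_mem hU p) hx fun n hn => by
      rw [← pow_mul]
      exact horth _ (hNp.trans (Nat.le_mul_of_pos_right p hn))
  have hbound : ∀ j : ℕ, ‖F x‖ ≤ ‖F (((U ^ p) ^ j) x)‖ := fun j => by
    rw [← pow_mul]
    refine norm_apply_le_of_Spow_eq_self hU hW ?_ x
    convert hper ((N + 1) * j) using 2
    ring
  simpa using ge_of_tendsto' (hF.tendsto_apply_orthonormal hz).norm hbound

/-- if `P_K` lies in the closure of the periodic elements of `{S^n}`,
then `‖W‖ > 1`. -/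
theorem stmt12 (W : H ≃L[ℂ] H) (U : H →L[ℂ] H) (hU : U ∈ unitary (H →L[ℂ] H))
    (K : Submodule ℂ H) (hK : FiniteDimensional ℂ K) (hKne : K ≠ ⊥) (N : ℕ)
    (horth : ∀ n ≥ N, ∀ x ∈ K, ∀ y ∈ K, ⟪(U ^ n) x, y⟫_ℂ = 0)
    (hP : projCLM K hK ∈ closure {F : H →L[ℂ] H | IsCompactOperator F ∧
      ∃ N' : ℕ, 0 < N' ∧ ∀ k : ℕ, Spow W U (k * N') F = F}) :
    1 < ‖(W : H →L[ℂ] H)‖ := by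
  by_contra! hW
  have : Nontrivial K := Submodule.nontrivial_iff_ne_bot.mpr hKne
  obtain ⟨x, hx⟩ := exists_norm_eq K zero_le_one
  have hkills : {F : H →L[ℂ] H | IsCompactOperator F ∧
      ∃ N' : ℕ, 0 < N' ∧ ∀ k : ℕ, Spow W U (k * N') F = F} ⊆ {F | F x = 0} :=
    fun F ⟨hF, _, hN', hper⟩ => apply_eq_zero_of_forall_Spow_eq_self hU hW
      (by simpa using hx) (fun n hn => horth n hn x x.2 x x.2) hF hN' hper
  have hPx0 : projCLM K hK x = 0 :=
    closure_minimal hkills (isClosed_eq (continuous_eval_const _) continuous_const) hP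
  have hPx : projCLM K hK x = x := K.starProjection_eq_self_iff.mpr x.2
  simp [hPx] at hPx0
  simp [hPx0] at hx

end
end
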